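/- Let F be a non-fragile connected GSC and x a cut point of F. Then there exists an infinite word 𝐢 = i₁i₂⋯ ∈ 𝒟^∞ such that {x} = ⋂_{n=1}^∞ φ_{i₁⋯i_n}(F) and φ_{i₁⋯i_n}^{−1}(x) is a cut point of F for every n ≥ 1. -/
import Mathlib


open Set

/-- The map φ_d(x) = (x + d)/N on ℝ². -/
noncomputable def phi (N : ℕ) (d : ℕ × ℕ) (x : ℝ × ℝ) : ℝ × ℝ :=
  ((x.1 + d.1) / N, (x.2 + d.2) / N)

/-- φ_{i₁⋯iₙ} = φ_{i₁} ∘ ⋯ ∘ φ_{iₙ}. -/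
noncomputable def phiWord (N : ℕ) (w : List (ℕ × ℕ)) : (ℝ × ℝ) → (ℝ × ℝ) :=
  w.foldr (fun d f => phi N d ∘ f) id

/-- A connected GSC is fragile if the digit set splits into two nonempty parts
whose unions of level-1 cells meet in a single point. -/
def Fragile (N : ℕ) (D : Finset (ℕ × ℕ)) (F : Set (ℝ × ℝ)) : Prop :=
  ∃ D₁ D₂ : Finset (ℕ × ℕ), D₁ ∪ D₂ = D ∧ Disjoint D₁ D₂ ∧
    D₁.Nonempty ∧ D₂.Nonempty ∧
    ∃ z : ℝ × ℝ, (⋃ d ∈ D₁, phi N d '' F) ∩ (⋃ d ∈ D₂, phi N d '' F) = {z}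

lemma phi_cont (N : ℕ) (d : ℕ × ℕ) : Continuous (phi N d) := by
  unfold phi; fun_prop

lemma phi_dist (N : ℕ) (hN : 0 < N) (d : ℕ × ℕ) (a b : ℝ × ℝ) :
    dist (phi N d a) (phi N d b) = dist a b / N := by
  have hN' : (0:ℝ) < N := by exact_mod_cast hN
  simp only [phi, Prod.dist_eq, Real.dist_eq]
  rw [div_sub_div_same, div_sub_div_same, abs_div, abs_div, abs_of_pos hN',
    add_sub_add_right_eq_sub, add_sub_add_right_eq_sub,
    Monotone.map_max (f := fun t => t / (N:ℝ))]
  intro u v huv; dsimp only; gcongr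

lemma phi_inj (N : ℕ) (hN : 0 < N) (d : ℕ × ℕ) : Function.Injective (phi N d) := by
  intro a b hab
  have h := phi_dist N hN d a b
  rw [hab, dist_self] at h
  have hN' : (0:ℝ) < N := by exact_mod_cast hN
  rw [eq_comm, div_eq_zero_iff] at h
  rcases h with h | h
  · exact dist_eq_zero.mp h
  · exact absurd h (ne_of_gt hN')

lemma key_lemma (N : ℕ) (hN : 0 < N) (D : Finset (ℕ × ℕ)) (F : Set (ℝ × ℝ))
    (hFc : IsCompact F) (hFattr : F = ⋃ d ∈ D, phi N d '' F)
    (hFconn : IsConnected F) (hnf : ¬ Fragile N D F)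
    (x : ℝ × ℝ) (hx : x ∈ F) (hcut : ¬ IsPreconnected (F \ {x})) :
    ∃ d ∈ D, ∃ y ∈ F, ¬ IsPreconnected (F \ {y}) ∧ phi N d y = x := by
  classical
  by_contra hcon
  push_neg at hcon
  -- every preimage of x in a cell is a non-cut-point, i.e. F \ {y} preconnected
  have hgood : ∀ d ∈ D, ∀ y ∈ F, phi N d y = x → IsPreconnected (F \ {y}) := by
    intro d hd y hy hxy
    by_contra hbad
    exact hcon d hd y hy hbad hxy
  -- unpack the disconnection of F \ {x}
  rw [IsPreconnected] at hcut
  push_neg at hcut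
  obtain ⟨U, V, hUo, hVo, hUV, hU, hV, hdisj'⟩ := hcut
  -- cells
  set cell : (ℕ × ℕ) → Set (ℝ × ℝ) := fun d => phi N d '' F with hcell
  have hcellF : ∀ d ∈ D, cell d ⊆ F := by
    intro d hd z hz
    rw [hFattr]; exact mem_biUnion hd hz
  -- F has at least two points
  have hs_ne : (F \ {x}).Nonempty := hU.mono (inter_subset_left)
  obtain ⟨p, hpF, hpx⟩ := hs_ne
  -- each cell minus x is nonempty
  have hcell_ne : ∀ d : ℕ × ℕ, (cell d \ {x}).Nonempty := by
    intro d
    rcases eq_or_ne (phi N d p) x with h | h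
    · refine ⟨phi N d x, ⟨mem_image_of_mem _ hx, ?_⟩⟩
      simp only [mem_singleton_iff]
      intro hc
      exact hpx (by simpa [mem_singleton_iff] using
        (phi_inj N hN d (h.trans hc.symm) : p = x))
    · exact ⟨phi N d p, mem_image_of_mem _ hpF, h⟩
  -- each cell minus x is preconnected
  have hcell_pc : ∀ d ∈ D, IsPreconnected (cell d \ {x}) := by
    intro d hd
    by_cases hxc : x ∈ cell d
    · obtain ⟨y, hyF, hyx⟩ := hxc
      have hpre : IsPreconnected (F \ {y}) := hgood d hd y hyF hyx
      have himg : cell d \ {x} = phi N d '' (F \ {y}) := by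
        rw [hcell]
        rw [image_diff (phi_inj N hN d), image_singleton, hyx]
      rw [himg]
      exact hpre.image _ (phi_cont N d).continuousOn
    · have : cell d \ {x} = cell d := by
        apply diff_singleton_eq_self hxc
      rw [this, hcell]
      exact hFconn.isPreconnected.image _ (phi_cont N d).continuousOn
  -- each cell minus x lies in U or V
  have hside : ∀ d ∈ D, cell d \ {x} ⊆ U ∨ cell d \ {x} ⊆ V := by
    intro d hd
    have hsub : cell d \ {x} ⊆ U ∪ V :=
      fun z hz => hUV ⟨hcellF d hd hz.1, hz.2⟩
    by_contra hnot
    push_neg at hnot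
    obtain ⟨hnU, hnV⟩ := hnot
    have hmU : (cell d \ {x} ∩ U).Nonempty := by
      obtain ⟨z, hz, hzV⟩ := not_subset.mp hnV
      rcases hsub hz with h | h
      · exact ⟨z, hz, h⟩
      · exact absurd h hzV
    have hmV : (cell d \ {x} ∩ V).Nonempty := by
      obtain ⟨z, hz, hzU⟩ := not_subset.mp hnU
      rcases hsub hz with h | h
      · exact absurd h hzU
      · exact ⟨z, hz, h⟩
    obtain ⟨z, hz, hzUV⟩ := hcell_pc d hd U V hUo hVo hsub hmU hmV
    have : z ∈ (F \ {x}) ∩ (U ∩ V) :=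
      ⟨⟨hcellF d hd hz.1, hz.2⟩, hzUV⟩
    rw [hdisj'] at this; exact this
  -- split the digits
  set D₁ : Finset (ℕ × ℕ) := D.filter (fun d => cell d \ {x} ⊆ U) with hD₁
  set D₂ : Finset (ℕ × ℕ) := D.filter (fun d => ¬ (cell d \ {x} ⊆ U)) with hD₂
  have hunion : D₁ ∪ D₂ = D := Finset.filter_union_filter_not_eq _ D
  have hdisjD : Disjoint D₁ D₂ := Finset.disjoint_filter_filter_not D D _
  have hD₂V : ∀ d ∈ D₂, cell d \ {x} ⊆ V := by
    intro d hd
    obtain ⟨hdD, hnU⟩ := Finset.mem_filter.mp hd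
    rcases hside d hdD with h | h
    · exact absurd h hnU
    · exact h
  -- D₁ nonempty
  obtain ⟨a, ⟨haF, hax⟩, haU⟩ := hU
  have haFx : a ∈ F := haF
  obtain ⟨da, hda, hac⟩ : ∃ d ∈ D, a ∈ cell d := by
    have := hFattr ▸ haFx
    rw [mem_iUnion₂] at this
    obtain ⟨d, hd, h⟩ := this
    exact ⟨d, hd, h⟩
  have hdaD₁ : da ∈ D₁ := by
    rw [hD₁, Finset.mem_filter]
    refine ⟨hda, ?_⟩
    rcases hside da hda with h | h
    · exact h
    · exfalso
      have : a ∈ (F \ {x}) ∩ (U ∩ V) := ⟨⟨haF, hax⟩, haU, h ⟨hac, hax⟩⟩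
      rw [hdisj'] at this; exact this
  -- D₂ nonempty
  obtain ⟨b, ⟨hbF, hbx⟩, hbV⟩ := hV
  obtain ⟨db, hdb, hbc⟩ : ∃ d ∈ D, b ∈ cell d := by
    have := hFattr ▸ (hbF : b ∈ F)
    rw [mem_iUnion₂] at this
    obtain ⟨d, hd, h⟩ := this
    exact ⟨d, hd, h⟩
  have hdbD₂ : db ∈ D₂ := by
    rw [hD₂, Finset.mem_filter]
    refine ⟨hdb, ?_⟩
    intro hsubU
    have : b ∈ (F \ {x}) ∩ (U ∩ V) := ⟨⟨hbF, hbx⟩, hsubU ⟨hbc, hbx⟩, hbV⟩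
    rw [hdisj'] at this; exact this
  -- the intersection of the two unions
  set K₁ : Set (ℝ × ℝ) := ⋃ d ∈ D₁, cell d with hK₁
  set K₂ : Set (ℝ × ℝ) := ⋃ d ∈ D₂, cell d with hK₂
  have hZsub : K₁ ∩ K₂ ⊆ {x} := by
    rintro z ⟨hz₁, hz₂⟩
    simp only [hK₁, hK₂, mem_iUnion] at hz₁ hz₂
    obtain ⟨d₁, hd₁, hzc₁⟩ := hz₁
    obtain ⟨d₂, hd₂, hzc₂⟩ := hz₂
    by_contra hzx
    have hzU : z ∈ U := (Finset.mem_filter.mp hd₁).2 ⟨hzc₁, hzx⟩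
    have hzV : z ∈ V := hD₂V d₂ hd₂ ⟨hzc₂, hzx⟩
    have : z ∈ (F \ {x}) ∩ (U ∩ V) :=
      ⟨⟨hcellF d₁ (Finset.mem_filter.mp hd₁).1 hzc₁, hzx⟩, hzU, hzV⟩
    rw [hdisj'] at this; exact this
  by_cases hxZ : x ∈ K₁ ∩ K₂
  · -- fragile
    apply hnf
    refine ⟨D₁, D₂, hunion, hdisjD, ⟨da, hdaD₁⟩, ⟨db, hdbD₂⟩, x, ?_⟩
    exact Subset.antisymm hZsub (singleton_subset_iff.mpr hxZ)
  · -- F disconnected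
    have hZempty : K₁ ∩ K₂ = ∅ := by
      rw [eq_empty_iff_forall_notMem]
      intro z hz
      have := hZsub hz
      rw [mem_singleton_iff] at this
      exact hxZ (this ▸ hz)
    have hcover : F ⊆ K₁ ∪ K₂ := by
      intro z hz
      rw [hFattr] at hz
      simp only [mem_iUnion] at hz
      obtain ⟨d, hd, hzc⟩ := hz
      rw [← hunion] at hd
      rcases Finset.mem_union.mp hd with h | h
      · exact Or.inl (mem_biUnion h hzc)
      · exact Or.inr (mem_biUnion h hzc)
    have hK₁c : IsClosed K₁ := by
      apply Set.Finite.isClosed_biUnion (D₁ : Set (ℕ × ℕ)).toFinite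
      intro d _
      exact (hFc.image (phi_cont N d)).isClosed
    have hK₂c : IsClosed K₂ := by
      apply Set.Finite.isClosed_biUnion (D₂ : Set (ℕ × ℕ)).toFinite
      intro d _
      exact (hFc.image (phi_cont N d)).isClosed
    have hFK₁ : (F ∩ K₁).Nonempty := by
      refine ⟨a, haF, ?_⟩
      exact mem_biUnion hdaD₁ hac
    have hFK₂ : (F ∩ K₂).Nonempty := ⟨b, hbF, mem_biUnion hdbD₂ hbc⟩
    have := (isPreconnected_closed_iff.mp hFconn.isPreconnected) K₁ K₂ hK₁c hK₂c
      hcover hFK₁ hFK₂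
    obtain ⟨z, _, hz⟩ := this
    rw [hZempty] at hz
    exact hz

lemma phiWord_append (N : ℕ) (w w' : List (ℕ × ℕ)) :
    phiWord N (w ++ w') = phiWord N w ∘ phiWord N w' := by
  induction w with
  | nil => rfl
  | cons d w ih =>
    show phi N d ∘ phiWord N (w ++ w') = (phi N d ∘ phiWord N w) ∘ phiWord N w'
    rw [ih]; rfl

lemma phiWord_dist (N : ℕ) (hN : 0 < N) (w : List (ℕ × ℕ)) (a b : ℝ × ℝ) :
    dist (phiWord N w a) (phiWord N w b) = dist a b / N ^ w.length := by
  induction w with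
  | nil => simp [phiWord]
  | cons d w ih =>
    show dist (phi N d (phiWord N w a)) (phi N d (phiWord N w b)) = _
    rw [phi_dist N hN, ih, List.length_cons, pow_succ, div_div]

/-- If F is a non-fragile connected GSC and x a cut point, then there is an
infinite word i₁i₂⋯ ∈ 𝒟^∞ with {x} = ⋂ₙ φ_{i₁⋯iₙ}(F) and φ_{i₁⋯iₙ}⁻¹(x) a cut
point of F for every n ≥ 1. -/
theorem stmt12 (N : ℕ) (hN : 2 ≤ N) (D : Finset (ℕ × ℕ))
    (hD : ∀ d ∈ D, d.1 < N ∧ d.2 < N) (hDcard : 1 < D.card ∧ D.card < N ^ 2)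
    (F : Set (ℝ × ℝ)) (hFne : F.Nonempty) (hFc : IsCompact F)
    (hFattr : F = ⋃ d ∈ D, phi N d '' F) (hFconn : IsConnected F)
    (hnf : ¬ Fragile N D F)
    (x : ℝ × ℝ) (hx : x ∈ F) (hcut : ¬ IsPreconnected (F \ {x})) :
    ∃ seq : ℕ → ℕ × ℕ, (∀ n, seq n ∈ D) ∧
      (⋂ n : ℕ, phiWord N (List.map seq (List.range (n + 1))) '' F) = {x} ∧
      ∀ n : ℕ, 1 ≤ n → ∃ y : ℝ × ℝ, y ∈ F ∧ ¬ IsPreconnected (F \ {y}) ∧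
        phiWord N (List.map seq (List.range n)) y = x  := by
  classical
  have hN0 : 0 < N := lt_of_lt_of_le Nat.zero_lt_two hN
  have hN1 : (1:ℝ) < N := by exact_mod_cast hN
  -- the type of cut points
  set T := {p : ℝ × ℝ // p ∈ F ∧ ¬ IsPreconnected (F \ {p})} with hT
  have step : ∀ t : T, ∃ p : (ℕ × ℕ) × T, p.1 ∈ D ∧ phi N p.1 p.2.val = t.val := by
    intro t
    obtain ⟨d, hd, y, hy, hyc, hphi⟩ :=
      key_lemma N hN0 D F hFc hFattr hFconn hnf t.val t.2.1 t.2.2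
    exact ⟨⟨d, ⟨y, hy, hyc⟩⟩, hd, hphi⟩
  choose f hf1 hf2 using step
  set chain : ℕ → T := fun n => Nat.rec ⟨x, hx, hcut⟩ (fun _ t => (f t).2) n with hchain
  set seq : ℕ → ℕ × ℕ := fun n => (f (chain n)).1 with hseq
  have hchain_succ : ∀ n, chain (n + 1) = (f (chain n)).2 := fun n => rfl
  have hkey : ∀ n : ℕ, phiWord N (List.map seq (List.range n)) (chain n).val = x := by
    intro n
    induction n with
    | zero => rfl
    | succ n ih =>
      rw [List.range_succ, List.map_append, List.map_singleton, phiWord_append]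
      have h1 : phiWord N [seq n] (chain (n+1)).val = (chain n).val := by
        show phi N (seq n) ((chain (n+1)).val) = (chain n).val
        exact hf2 (chain n)
      calc phiWord N (List.map seq (List.range n)) (phiWord N [seq n] (chain (n+1)).val)
          = phiWord N (List.map seq (List.range n)) (chain n).val := by rw [h1]
        _ = x := ih
  refine ⟨seq, fun n => hf1 (chain n), ?_, ?_⟩
  · -- the intersection is {x}
    apply Subset.antisymm
    · intro z hz
      rw [mem_iInter] at hz
      rw [mem_singleton_iff, ← dist_le_zero]
      have hbound : ∀ n : ℕ, dist z x ≤ Metric.diam F / N ^ (n+1) := by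
        intro n
        obtain ⟨a, ha, haz⟩ := hz n
        have hx' := hkey (n+1)
        have hlen : (List.map seq (List.range (n+1))).length = n + 1 := by
          simp
        have hd := phiWord_dist N hN0 (List.map seq (List.range (n+1))) a (chain (n+1)).val
        rw [hlen, haz, hx'] at hd
        rw [hd]
        gcongr
        exact Metric.dist_le_diam_of_mem hFc.isBounded ha (chain (n+1)).2.1
      have htend : Filter.Tendsto (fun n : ℕ => Metric.diam F / N ^ (n+1))
          Filter.atTop (nhds 0) := by
        apply Filter.Tendsto.div_atTop tendsto_const_nhds
        exact (tendsto_pow_atTop_atTop_of_one_lt hN1).comp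
          (Filter.tendsto_add_atTop_nat 1)
      exact ge_of_tendsto' htend hbound
    · intro z hz
      rw [mem_singleton_iff] at hz
      subst hz
      rw [mem_iInter]
      intro n
      exact ⟨(chain (n+1)).val, (chain (n+1)).2.1, hkey (n+1)⟩
  · intro n hn
    exact ⟨(chain n).val, (chain n).2.1, (chain n).2.2, hkey n⟩
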